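/- arXiv:2007.12877 — 6 statements merged into one kernel-verified Lean document; each statement's English description precedes it below -/
import Mathlib

section
/- For any real α ≥ 2 and any x ∈ [0,1], we have x^α(1-x) + x(1-x)^α ≤ 1/(2α). -/
/-!
By the symmetry `x ↔ 1 - x` we may assume `1 - x ≤ x`. Then `(1 - x)^α ≤ (1 - x)^2 x^(α-2)`, which
bounds the left-hand side by `x^(α-1) (1 - x)`. Weighted AM-GM gives
`x^β (1 - x) ≤ (β/(β+1))^β / (β+1)`, and Bernoulli's inequality `(1 + 1/β)^β ≥ 2` turns this into
`1/(2(β+1))`; take `β = α - 1`.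
-/

open Real

lemma rpow_mul_mul_one_sub_le {β x : ℝ} (hβ : 0 ≤ β) (hx0 : 0 ≤ x) (hx1 : x ≤ 1) :
    x ^ β * (β * (1 - x)) ≤ (β / (β + 1)) ^ (β + 1) := by
  have hβ1 : 0 < β + 1 := by linarith
  have hy : 0 ≤ β * (1 - x) := mul_nonneg hβ (by linarith)
  -- AM-GM with weights `β/(β+1)` and `1/(β+1)` on `x` and `β(1-x)`, whose weighted mean is constant
  have amgm : x ^ (β / (β + 1)) * (β * (1 - x)) ^ (1 / (β + 1)) ≤ β / (β + 1) := by
    have hmean : β / (β + 1) * x + 1 / (β + 1) * (β * (1 - x)) = β / (β + 1) := by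
      field_simp; ring
    exact (geom_mean_le_arith_mean2_weighted (by positivity) (by positivity) hx0 hy
      (by field_simp)).trans_eq hmean
  calc x ^ β * (β * (1 - x))
      = (x ^ (β / (β + 1)) * (β * (1 - x)) ^ (1 / (β + 1))) ^ (β + 1) := by
        rw [mul_rpow (by positivity) (by positivity), ← rpow_mul hx0, ← rpow_mul hy,
          div_mul_cancel₀ β hβ1.ne', div_mul_cancel₀ 1 hβ1.ne', rpow_one]
    _ ≤ (β / (β + 1)) ^ (β + 1) := by gcongr

lemma div_add_one_rpow_le_half {β : ℝ} (hβ : 1 ≤ β) : (β / (β + 1)) ^ β ≤ 1 / 2 := by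
  have hβ0 : 0 < β := by linarith
  have bernoulli : 2 ≤ (1 + 1 / β) ^ β := by
    have := one_add_mul_self_le_rpow_one_add (s := 1 / β) (by linarith [one_div_pos.2 hβ0]) hβ
    rwa [mul_one_div_cancel hβ0.ne', one_add_one_eq_two] at this
  have hinv : β / (β + 1) = (1 + 1 / β)⁻¹ := by field_simp
  rw [hinv, inv_rpow (by positivity), one_div 2]
  exact inv_anti₀ two_pos bernoulli

lemma rpow_mul_one_sub_le {β x : ℝ} (hβ : 1 ≤ β) (hx0 : 0 ≤ x) (hx1 : x ≤ 1) :
    x ^ β * (1 - x) ≤ 1 / (2 * (β + 1)) := by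
  have hβ0 : 0 < β := by linarith
  have hβ1 : 0 < β + 1 := by linarith
  have key : x ^ β * (1 - x) * β ≤ 1 / (2 * (β + 1)) * β :=
    calc x ^ β * (1 - x) * β = x ^ β * (β * (1 - x)) := by ring
      _ ≤ (β / (β + 1)) ^ (β + 1) := rpow_mul_mul_one_sub_le hβ0.le hx0 hx1
      _ = (β / (β + 1)) ^ β * (β / (β + 1)) := by rw [rpow_add_one (by positivity)]
      _ ≤ 1 / 2 * (β / (β + 1)) := by gcongr; exact div_add_one_rpow_le_half hβ
      _ = 1 / (2 * (β + 1)) * β := by field_simp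
  exact le_of_mul_le_mul_right key hβ0

lemma rpow_mul_add_mul_rpow_le {α x y : ℝ} (hα : 2 ≤ α) (hy : 0 ≤ y) (hyx : y ≤ x) :
    x ^ α * y + x * y ^ α ≤ x ^ (α - 1) * y * (x + y) := by
  have hx : 0 ≤ x := hy.trans hyx
  have hxα : x ^ α = x ^ (α - 1) * x := by
    rw [← rpow_add_one' hx (by linarith)]; ring_nf
  have hxα1 : x ^ (α - 1) = x * x ^ (α - 2) := by
    rw [← rpow_one_add' hx (by linarith)]; ring_nf
  have hyα : y ^ α = y * y * y ^ (α - 2) := by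
    rw [mul_assoc, ← rpow_one_add' hy (by linarith), ← rpow_one_add' hy (by linarith)]; ring_nf
  have hyx_pow : y ^ (α - 2) ≤ x ^ (α - 2) := rpow_le_rpow hy hyx (by linarith)
  calc x ^ α * y + x * y ^ α = x ^ (α - 1) * y * x + x * y * y * y ^ (α - 2) := by
        rw [hxα, hyα]; ring
    _ ≤ x ^ (α - 1) * y * x + x * y * y * x ^ (α - 2) := by gcongr
    _ = x ^ (α - 1) * y * (x + y) := by rw [hxα1]; ring

theorem stmt_0 (α x : ℝ) (hα : 2 ≤ α) (hx : x ∈ Set.Icc (0:ℝ) 1) :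
    x ^ α * (1 - x) + x * (1 - x) ^ α ≤ 1 / (2 * α) := by
  wlog hhalf : 1 - x ≤ x generalizing x
  · have := this (1 - x) ⟨by linarith [hx.2], by linarith [hx.1]⟩ (by linarith)
    rw [sub_sub_cancel] at this
    linarith
  calc x ^ α * (1 - x) + x * (1 - x) ^ α ≤ x ^ (α - 1) * (1 - x) * (x + (1 - x)) :=
        rpow_mul_add_mul_rpow_le hα (by linarith [hx.2]) hhalf
    _ = x ^ (α - 1) * (1 - x) := by ring
    _ ≤ 1 / (2 * (α - 1 + 1)) := rpow_mul_one_sub_le (by linarith) hx.1 hx.2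
    _ = 1 / (2 * α) := by ring
end

section
/- For every γ ∈ (0,1), the equation √(1-2T) - γ - T·ln((1+√(1-2T))/(1-√(1-2T))) = 0 has a unique solution T_c(γ) in the open interval (0, 1/2). -/
/-!
Put `s = √(1 - 2T)` and `F T = s - T log((1 + s)/(1 - s))`, so that the equation reads
`F T = γ`. Since `1 - s² = 2T`, the two terms coming from `s'` cancel in `F'`, leaving
`F' T = -log((1 + s)/(1 - s)) < 0` on `(0, 1/2)`. Moreover `F` is continuous on `[0, 1/2]`
(at `0` because `T log(1/T) → 0`), with `F 0 = 1` and `F (1/2) = 0`, so every `γ ∈ (0, 1)`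
is taken exactly once, and inside `(0, 1/2)`.
-/

open Real Set Filter Topology

noncomputable def criticalCurve (T : ℝ) : ℝ :=
  √(1 - 2 * T) - T * log ((1 + √(1 - 2 * T)) / (1 - √(1 - 2 * T)))

lemma criticalCurve_zero : criticalCurve 0 = 1 := by
  simp [criticalCurve]

lemma criticalCurve_half : criticalCurve (1 / 2) = 0 := by
  simp [criticalCurve]

lemma sqrt_one_sub_two_mul_lt_one {T : ℝ} (hT : 0 < T) : √(1 - 2 * T) < 1 := by
  rw [sqrt_lt' one_pos]
  linarith

lemma log_one_add_sqrt_div_one_sub_sqrt_pos {T : ℝ} (hT₀ : 0 < T) (hT₁ : T < 1 / 2) :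
    0 < log ((1 + √(1 - 2 * T)) / (1 - √(1 - 2 * T))) := by
  have hs := sqrt_one_sub_two_mul_lt_one hT₀
  refine log_pos ?_
  rw [lt_div_iff₀ (by linarith)]
  linarith [sqrt_pos.mpr (show 0 < 1 - 2 * T by linarith)]

lemma HasDerivAt.log_one_add_div_one_sub {u : ℝ → ℝ} {u' x : ℝ} (hu : HasDerivAt u u' x)
    (h₁ : -1 < u x) (h₂ : u x < 1) :
    HasDerivAt (fun y ↦ Real.log ((1 + u y) / (1 - u y))) (2 * u' / (1 - u x ^ 2)) x := by
  have hsub : 1 - u x ≠ 0 := by linarith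
  have hadd : 1 + u x ≠ 0 := by linarith
  refine (((hu.const_add 1).div (hu.const_sub 1) hsub).log (div_ne_zero hadd hsub)).congr_deriv ?_
  have hsq : 1 - u x ^ 2 = (1 + u x) * (1 - u x) := by ring
  rw [Pi.div_apply, hsq]
  field_simp
  ring

lemma hasDerivAt_criticalCurve {T : ℝ} (hT₀ : 0 < T) (hT₁ : T < 1 / 2) :
    HasDerivAt criticalCurve (-log ((1 + √(1 - 2 * T)) / (1 - √(1 - 2 * T)))) T := by
  have hpos : 0 < 1 - 2 * T := by linarith
  have hs : HasDerivAt (fun T ↦ √(1 - 2 * T)) (1 / (2 * √(1 - 2 * T)) * (-2)) T := by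
    refine (hasDerivAt_sqrt hpos.ne').comp T ?_
    simpa using ((hasDerivAt_id T).const_mul 2).const_sub 1
  have hL := hs.log_one_add_div_one_sub (by linarith [sqrt_nonneg (1 - 2 * T)])
    (sqrt_one_sub_two_mul_lt_one hT₀)
  refine (hs.sub ((hasDerivAt_id T).mul hL)).congr_deriv ?_
  have hsq : √(1 - 2 * T) ^ 2 = 1 - 2 * T := sq_sqrt hpos.le
  have hs₀ : √(1 - 2 * T) ≠ 0 := (sqrt_pos.mpr hpos).ne'
  rw [hsq, id]
  field_simp
  ring

lemma continuousAt_criticalCurve {T : ℝ} (hT : 0 < T) : ContinuousAt criticalCurve T := by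
  have hs := sqrt_one_sub_two_mul_lt_one hT
  have hsub : 1 - √(1 - 2 * T) ≠ 0 := by linarith
  have hadd : 1 + √(1 - 2 * T) ≠ 0 := by linarith [sqrt_nonneg (1 - 2 * T)]
  unfold criticalCurve
  fun_prop (disch := first | exact hsub | exact div_ne_zero hadd hsub)

lemma criticalCurve_le_one {T : ℝ} (hT₀ : 0 < T) (hT₁ : T < 1 / 2) : criticalCurve T ≤ 1 := by
  have := log_one_add_sqrt_div_one_sub_sqrt_pos hT₀ hT₁
  unfold criticalCurve
  nlinarith [sqrt_one_sub_two_mul_lt_one hT₀]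

lemma one_sub_le_criticalCurve {T : ℝ} (hT₀ : 0 < T) (hT₁ : T ≤ 1 / 2) :
    1 - 2 * T - (T * log 2 - T * log T) ≤ criticalCurve T := by
  set s := √(1 - 2 * T)
  have hs : s < 1 := sqrt_one_sub_two_mul_lt_one hT₀
  have hsq : s ^ 2 = 1 - 2 * T := sq_sqrt (by linarith)
  have hs₀ : 0 ≤ s := sqrt_nonneg _
  -- `(1 + s)/(1 - s) = (1 + s)²/(2T) ≤ 2/T`
  have hratio : (1 + s) / (1 - s) ≤ 2 / T := by
    rw [div_le_div_iff₀ (by linarith) hT₀]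
    nlinarith
  have hlog : log ((1 + s) / (1 - s)) ≤ log 2 - log T := by
    rw [← log_div two_ne_zero hT₀.ne']
    exact log_le_log (by positivity) hratio
  have : T * log ((1 + s) / (1 - s)) ≤ T * (log 2 - log T) :=
    mul_le_mul_of_nonneg_left hlog hT₀.le
  unfold criticalCurve
  nlinarith

lemma continuousWithinAt_criticalCurve_zero : ContinuousWithinAt criticalCurve (Ici 0) 0 := by
  rw [← continuousWithinAt_Ioi_iff_Ici, ContinuousWithinAt, criticalCurve_zero]
  have hlower : Tendsto (fun T ↦ 1 - 2 * T - (T * log 2 - T * log T)) (𝓝[>] 0) (𝓝 1) := by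
    have hc : Continuous fun T : ℝ ↦ 1 - 2 * T - (T * log 2 - T * log T) := by
      have := continuous_mul_log
      fun_prop
    simpa using hc.continuousWithinAt.tendsto (s := Ioi 0) (x := 0)
  have hnear : Ioo (0 : ℝ) (1 / 2) ∈ 𝓝[>] 0 := Ioo_mem_nhdsGT one_half_pos
  exact tendsto_of_tendsto_of_tendsto_of_le_of_le' hlower tendsto_const_nhds
    (eventually_of_mem hnear fun _ hT ↦ one_sub_le_criticalCurve hT.1 hT.2.le)
    (eventually_of_mem hnear fun _ hT ↦ criticalCurve_le_one hT.1 hT.2)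

lemma continuousOn_criticalCurve : ContinuousOn criticalCurve (Icc 0 (1 / 2)) := by
  intro T hT
  rcases hT.1.eq_or_lt with rfl | hT₀
  · exact continuousWithinAt_criticalCurve_zero.mono Icc_subset_Ici_self
  · exact (continuousAt_criticalCurve hT₀).continuousWithinAt

lemma strictAntiOn_criticalCurve : StrictAntiOn criticalCurve (Icc 0 (1 / 2)) := by
  refine strictAntiOn_of_deriv_neg (convex_Icc _ _) continuousOn_criticalCurve fun T hT ↦ ?_
  rw [interior_Icc] at hT
  rw [(hasDerivAt_criticalCurve hT.1 hT.2).deriv, neg_neg_iff_pos]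
  exact log_one_add_sqrt_div_one_sub_sqrt_pos hT.1 hT.2

theorem stmt_4 (γ : ℝ) (hγ : γ ∈ Set.Ioo (0:ℝ) 1) :
    ∃ Tc : ℝ, Tc ∈ Set.Ioo (0:ℝ) (1/2) ∧
      Real.sqrt (1 - 2 * Tc) - γ -
        Tc * Real.log ((1 + Real.sqrt (1 - 2 * Tc)) / (1 - Real.sqrt (1 - 2 * Tc))) = 0 ∧
      ∀ T ∈ Set.Ico (0:ℝ) (1/2),
        Real.sqrt (1 - 2 * T) - γ -
          T * Real.log ((1 + Real.sqrt (1 - 2 * T)) / (1 - Real.sqrt (1 - 2 * T))) = 0 →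
        T = Tc := by
  have hroot : ∀ T, √(1 - 2 * T) - γ - T * log ((1 + √(1 - 2 * T)) / (1 - √(1 - 2 * T))) = 0 ↔
      criticalCurve T = γ := fun T ↦ by
    rw [sub_right_comm, sub_eq_zero]
    exact Iff.rfl
  have hγ' : γ ∈ Ioo (criticalCurve (1 / 2)) (criticalCurve 0) := by
    rwa [criticalCurve_zero, criticalCurve_half]
  obtain ⟨Tc, hTc, hFTc⟩ :=
    intermediate_value_Ioo' (by norm_num) continuousOn_criticalCurve hγ'
  refine ⟨Tc, hTc, (hroot Tc).2 hFTc, fun T hT hFT ↦ ?_⟩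
  exact strictAntiOn_criticalCurve.injOn (Ico_subset_Icc_self hT) (Ioo_subset_Icc_self hTc)
    (((hroot T).1 hFT).trans hFTc.symm)
end

section
/- For every γ ∈ (0,1), the function g_γ(u) := u - γ - ((1-u²)/2)·ln((1+u)/(1-u)) defined on (-1,1) is monotone nondecreasing, strictly increasing on (0,1), and has exactly one root, which lies in (0,1). -/
/-!
The derivative of `criticalFn γ` is `u * log ((1 + u) / (1 - u)) = 2 u artanh u`, which is positive
except at `u = 0`, so the function is strictly increasing on `(-1, 1)`. It equals `-γ < 0` at `0`
and tends to `1 - γ > 0` as `u → 1⁻`, so the intermediate value theorem gives a root in `(0, 1)`,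
unique by strict monotonicity.
-/

open Real Set Filter Topology

lemma strictMonoOn_Ioo_of_hasDerivAt_pos_of_ne {f f' : ℝ → ℝ} {a b c : ℝ} (hc : c ∈ Ioo a b)
    (hf : ∀ x ∈ Ioo a b, HasDerivAt f (f' x) x) (hf' : ∀ x ∈ Ioo a b, x ≠ c → 0 < f' x) :
    StrictMonoOn f (Ioo a b) := by
  have hcont : ContinuousOn f (Ioo a b) := fun x hx => (hf x hx).continuousAt.continuousWithinAt
  have piece (D : Set ℝ) (hD : D ⊆ Ioo a b) (hconv : Convex ℝ D) (hcD : c ∉ interior D) :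
      StrictMonoOn f D :=
    strictMonoOn_of_deriv_pos hconv (hcont.mono hD) fun x hx => by
      rw [(hf x (hD (interior_subset hx))).deriv]
      exact hf' x (hD (interior_subset hx)) (ne_of_mem_of_not_mem hx hcD)
  rw [← Ioc_union_Ico_eq_Ioo hc.1 hc.2]
  exact (piece _ (Ioc_subset_Ioo_right hc.2) (convex_Ioc _ _) (by simp)).union
    (piece _ (Ico_subset_Ioo_left hc.1) (convex_Ico _ _) (by simp)) (isGreatest_Ioc hc.1)
    (isLeast_Ico hc.2)

lemma hasDerivAt_log_one_add_div_one_sub {u : ℝ} (hu : u ∈ Ioo (-1 : ℝ) 1) :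
    HasDerivAt (fun x => log ((1 + x) / (1 - x))) (2 / (1 - u ^ 2)) u := by
  have h₁ : 1 + u ≠ 0 := by linarith [hu.1]
  have h₂ : 1 - u ≠ 0 := by linarith [hu.2]
  have h₃ : 1 - u ^ 2 ≠ 0 := by rw [show 1 - u ^ 2 = (1 + u) * (1 - u) by ring]; positivity
  convert (((hasDerivAt_id' u).const_add 1).fun_div ((hasDerivAt_id' u).const_sub 1) h₂).log
    (div_ne_zero h₁ h₂) using 1
  field_simp
  ring

lemma mul_log_one_add_div_one_sub_pos {u : ℝ} (hu : u ∈ Ioo (-1 : ℝ) 1) (hu₀ : u ≠ 0) :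
    0 < u * log ((1 + u) / (1 - u)) := by
  have h : log ((1 + u) / (1 - u)) = 2 * artanh u := by
    rw [artanh_eq_half_log ⟨hu.1.le, hu.2.le⟩]; ring
  rw [h]
  rcases hu₀.lt_or_gt with hneg | hpos
  · exact mul_pos_of_neg_of_neg hneg (by linarith [artanh_neg ⟨hu.1, hneg⟩])
  · exact mul_pos hpos (by linarith [artanh_pos ⟨hpos, hu.2⟩])

/-- The function `g_γ`. -/
noncomputable def criticalFn (γ u : ℝ) : ℝ := u - γ - ((1 - u ^ 2) / 2) * log ((1 + u) / (1 - u))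

lemma hasDerivAt_criticalFn (γ : ℝ) {u : ℝ} (hu : u ∈ Ioo (-1 : ℝ) 1) :
    HasDerivAt (criticalFn γ) (u * log ((1 + u) / (1 - u))) u := by
  have h : 1 - u ^ 2 ≠ 0 := by nlinarith [hu.1, hu.2]
  refine (((hasDerivAt_id' u).sub_const γ).fun_sub ((((hasDerivAt_pow 2 u).const_sub 1).div_const
    2).fun_mul (hasDerivAt_log_one_add_div_one_sub hu))).congr_deriv ?_
  field_simp
  ring

lemma tendsto_criticalFn_nhdsLT_one (γ : ℝ) :
    Tendsto (criticalFn γ) (𝓝[<] 1) (𝓝 (1 - γ)) := by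
  -- The log term extends continuously to `u = 1` because `x log x → 0` as `x → 0`.
  set F : ℝ → ℝ := fun u => u - γ - (1 + u) / 2 * ((1 - u) * log (1 + u) - (1 - u) * log (1 - u))
  have hF : ContinuousAt F 1 := by
    have hlog : ContinuousAt (fun u : ℝ => log (1 + u)) 1 :=
      (continuousAt_log (by norm_num)).comp (by fun_prop)
    have hmul_log : ContinuousAt (fun u : ℝ => (1 - u) * log (1 - u)) 1 :=
      (continuous_mul_log.comp (continuous_const.sub continuous_id)).continuousAt
    fun_prop
  have hF_one : F 1 = 1 - γ := by simp [F]
  have hF_eq : F =ᶠ[𝓝[<] 1] criticalFn γ := by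
    filter_upwards [Ioo_mem_nhdsLT (show (-1 : ℝ) < 1 by norm_num)] with u hu
    rw [criticalFn, log_div (by linarith [hu.1]) (by linarith [hu.2])]
    ring
  exact (hF_one ▸ hF.tendsto.mono_left nhdsWithin_le_nhds).congr' hF_eq

lemma exists_criticalFn_eq_zero {γ : ℝ} (hγ₀ : 0 < γ) (hγ₁ : γ < 1) :
    ∃ u₀ ∈ Ioo (0 : ℝ) 1, criticalFn γ u₀ = 0 := by
  obtain ⟨b, hb_pos, hb⟩ : ∃ b, 0 < criticalFn γ b ∧ b ∈ Ioo (0 : ℝ) 1 :=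
    (((tendsto_criticalFn_nhdsLT_one γ).eventually (lt_mem_nhds (by linarith))).and
      (Ioo_mem_nhdsLT one_pos)).exists
  have hcont : ContinuousOn (criticalFn γ) (Icc 0 b) := fun x hx =>
    (hasDerivAt_criticalFn γ ⟨by linarith [hx.1], by linarith [hx.2, hb.2]⟩).continuousAt
      |>.continuousWithinAt
  have hzero : criticalFn γ 0 = -γ := by simp [criticalFn]
  obtain ⟨u₀, hu₀, hroot⟩ := intermediate_value_Ioo hb.1.le hcont ⟨by linarith, hb_pos⟩
  exact ⟨u₀, ⟨hu₀.1, hu₀.2.trans hb.2⟩, hroot⟩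

lemma strictMonoOn_criticalFn (γ : ℝ) : StrictMonoOn (criticalFn γ) (Ioo (-1) 1) :=
  strictMonoOn_Ioo_of_hasDerivAt_pos_of_ne (c := 0) (by norm_num)
    (fun _ hu => hasDerivAt_criticalFn γ hu) fun _ hu hu₀ => mul_log_one_add_div_one_sub_pos hu hu₀

theorem stmt_5 (γ : ℝ) (hγ : γ ∈ Set.Ioo (0:ℝ) 1)
    (g : ℝ → ℝ)
    (hg : ∀ u, g u = u - γ - ((1 - u ^ 2) / 2) * Real.log ((1 + u) / (1 - u))) :
    MonotoneOn g (Set.Ioo (-1:ℝ) 1) ∧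
    StrictMonoOn g (Set.Ioo (0:ℝ) 1) ∧
    ∃ u₀ ∈ Set.Ioo (0:ℝ) 1, g u₀ = 0 ∧
      ∀ u ∈ Set.Ioo (-1:ℝ) 1, g u = 0 → u = u₀ := by
  obtain rfl : g = criticalFn γ := funext hg
  have hstrict := strictMonoOn_criticalFn γ
  have hsub : Ioo (0 : ℝ) 1 ⊆ Ioo (-1) 1 := Ioo_subset_Ioo_left (by norm_num)
  obtain ⟨u₀, hu₀, hroot⟩ := exists_criticalFn_eq_zero hγ.1 hγ.2
  exact ⟨hstrict.monotoneOn, hstrict.mono hsub, u₀, hu₀, hroot,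
    fun u hu hu_root => hstrict.injOn hu (hsub hu₀) (hu_root.trans hroot.symm)⟩
end

section
/- Fix γ ∈ (0,1), let T_c(γ) ∈ (0,1/2) be the unique solution of √(1-2T) - γ - T·ln((1+√(1-2T))/(1-√(1-2T))) = 0, and let f(x;T) = 2x - (1+γ) - T·ln(x/(1-x)). Then: (i) if 0 < T < T_c(γ), f(·;T) has exactly three zeros x₁ < x₂ < x₃ with x₁ ∈ (0, x_l), x₂ ∈ ((1+γ)/2, x_u), x₃ ∈ (x_u, 1), where x_{l,u} = (1 ∓ √(1-2T))/2; (ii) if T = T_c(γ), f has exactly two zeros, one in (0, x_l) and the other equal to x_u; (iii) if T > T_c(γ), f has exactly one zero, lying in (0, 1/2). -/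
/-!
Put `s = √(1 - 2T)` and `x_{l,u} = (1 ∓ s) / 2`. Since `∂ₓ f = 2 - T / (x (1 - x))` and
`2 x (1 - x) = (1 - (1 - 2x)²) / 2`, for `T < 1/2` the function `f` decreases on `(0, x_l]`,
increases on `[x_l, x_u]` and decreases on `[x_u, 1)`; for `T ≥ 1/2` it decreases throughout.
It tends to `+∞` at `0` and to `-∞` at `1`, and `f (1 - x) + f x = -2γ`, which together with
`f x_l < f x_u` gives `f x_l < -γ`. So the zeros are counted by the sign of
`f x_u = s - γ - T log ((1 + s) / (1 - s))`. With `T = (1 - s²) / 2` this is a function of `s`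
with derivative `s log ((1 + s) / (1 - s)) > 0`, vanishing at `s = √(1 - 2 T_c)`, so its sign is
that of `T_c - T`.
-/

open Real Set Filter Topology

noncomputable def drift (γ T x : ℝ) : ℝ := 2 * x - (1 + γ) - T * log (x / (1 - x))

noncomputable def upperTurningValue (γ s : ℝ) : ℝ :=
  s - γ - (1 - s ^ 2) / 2 * log ((1 + s) / (1 - s))

lemma hasDerivAt_log_add_div_sub {a b x : ℝ} (ha : 0 < a + x) (hb : 0 < b - x) :
    HasDerivAt (fun y => log ((a + y) / (b - y))) ((a + b) / ((a + x) * (b - x))) x := by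
  have hq : HasDerivAt (fun y => (a + y) / (b - y)) ((a + b) / (b - x) ^ 2) x :=
    (((hasDerivAt_id' x).const_add a).div ((hasDerivAt_id' x).const_sub b) hb.ne').congr_deriv
      (by ring)
  convert hq.log (div_pos ha hb).ne' using 1
  field_simp

lemma one_add_div_two_div_one_sub (s : ℝ) :
    (1 + s) / 2 / (1 - (1 + s) / 2) = (1 + s) / (1 - s) := by
  rw [show 1 - (1 + s) / 2 = (1 - s) / 2 by ring, div_div_div_cancel_right₀ two_ne_zero]

lemma log_one_add_div_one_sub_pos {s : ℝ} (hs : s ∈ Ioo 0 1) : 0 < log ((1 + s) / (1 - s)) :=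
  log_pos ((one_lt_div (sub_pos.2 hs.2)).2 (by linarith [hs.1]))

lemma exists_zero_of_tendsto_nhdsGT {f : ℝ → ℝ} {a b : ℝ} (hab : a < b)
    (hf : ContinuousOn f (Ioc a b)) (hlim : Tendsto f (𝓝[>] a) atTop) (hb : f b < 0) :
    ∃ x ∈ Ioo a b, f x = 0 := by
  obtain ⟨c, hfc, hc⟩ := ((hlim.eventually_gt_atTop 0).and (Ioo_mem_nhdsGT hab)).exists
  obtain ⟨x, hx, hfx⟩ := intermediate_value_Ioo' hc.2.le
    (hf.mono fun y hy => ⟨hc.1.trans_le hy.1, hy.2⟩) ⟨hb, hfc⟩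
  exact ⟨x, ⟨hc.1.trans hx.1, hx.2⟩, hfx⟩

lemma exists_zero_of_tendsto_nhdsLT {f : ℝ → ℝ} {a b : ℝ} (hab : a < b)
    (hf : ContinuousOn f (Ico a b)) (hlim : Tendsto f (𝓝[<] b) atBot) (ha : 0 < f a) :
    ∃ x ∈ Ioo a b, f x = 0 := by
  obtain ⟨c, hfc, hc⟩ := ((hlim.eventually_lt_atBot 0).and (Ioo_mem_nhdsLT hab)).exists
  obtain ⟨x, hx, hfx⟩ := intermediate_value_Ioo' hc.1.le
    (hf.mono fun y hy => ⟨hy.1, hy.2.trans_lt hc.2⟩) ⟨hfc, ha⟩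
  exact ⟨x, ⟨hx.1, hx.2.trans hc.2⟩, hfx⟩

section drift

variable {γ T : ℝ}

lemma drift_one_sub_add_drift (x : ℝ) : drift γ T (1 - x) + drift γ T x = -2 * γ := by
  have h : (1 - x) / (1 - (1 - x)) = (x / (1 - x))⁻¹ := by rw [inv_div, sub_sub_cancel]
  rw [drift, drift, h, log_inv]
  ring

lemma hasDerivAt_drift {x : ℝ} (hx : x ∈ Ioo 0 1) :
    HasDerivAt (drift γ T) (2 - T / (x * (1 - x))) x := by
  have hlog := hasDerivAt_log_add_div_sub (a := 0) (b := 1) (by simpa using hx.1)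
    (sub_pos.2 hx.2)
  simp only [zero_add] at hlog
  exact ((((hasDerivAt_id' x).const_mul 2).sub_const (1 + γ)).sub (hlog.const_mul T)).congr_deriv
    (by ring)

lemma continuousOn_drift : ContinuousOn (drift γ T) (Ioo 0 1) :=
  fun _ hx => (hasDerivAt_drift hx).continuousAt.continuousWithinAt

lemma drift_strictAntiOn {I : Set ℝ} (hI : Convex ℝ I) (hI01 : I ⊆ Ioo 0 1)
    (h : ∀ x ∈ interior I, 1 - 2 * T < (1 - 2 * x) ^ 2) : StrictAntiOn (drift γ T) I := by
  refine strictAntiOn_of_deriv_neg hI (continuousOn_drift.mono hI01) fun x hx => ?_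
  have hx01 := hI01 (interior_subset hx)
  rw [(hasDerivAt_drift hx01).deriv, sub_neg, lt_div_iff₀ (mul_pos hx01.1 (sub_pos.2 hx01.2))]
  nlinarith [h x hx]

lemma drift_strictMonoOn {I : Set ℝ} (hI : Convex ℝ I) (hI01 : I ⊆ Ioo 0 1)
    (h : ∀ x ∈ interior I, (1 - 2 * x) ^ 2 < 1 - 2 * T) : StrictMonoOn (drift γ T) I := by
  refine strictMonoOn_of_deriv_pos hI (continuousOn_drift.mono hI01) fun x hx => ?_
  have hx01 := hI01 (interior_subset hx)
  rw [(hasDerivAt_drift hx01).deriv, sub_pos, div_lt_iff₀ (mul_pos hx01.1 (sub_pos.2 hx01.2))]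
  nlinarith [h x hx]

lemma tendsto_drift_nhdsGT_zero (hT : 0 < T) : Tendsto (drift γ T) (𝓝[>] 0) atTop := by
  have hratio : Tendsto (fun x : ℝ => x / (1 - x)) (𝓝[>] 0) (𝓝[>] 0) := by
    refine tendsto_nhdsWithin_iff.2 ⟨?_, ?_⟩
    · have : ContinuousAt (fun x : ℝ => x / (1 - x)) 0 :=
        continuousAt_id.div (continuousAt_const.sub continuousAt_id) (by norm_num)
      simpa using this.tendsto.mono_left nhdsWithin_le_nhds
    · filter_upwards [Ioo_mem_nhdsGT (zero_lt_one' ℝ)] with x hx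
      exact div_pos hx.1 (sub_pos.2 hx.2)
  have hlog := (tendsto_log_nhdsGT_zero.comp hratio).const_mul_atBot hT
  have hlin : Tendsto (fun x : ℝ => 2 * x - (1 + γ)) (𝓝[>] 0) (𝓝 (2 * 0 - (1 + γ))) :=
    ((continuous_const.mul continuous_id).sub continuous_const).tendsto 0 |>.mono_left
      nhdsWithin_le_nhds
  exact hlin.add_atTop (tendsto_neg_atBot_atTop.comp hlog)

lemma tendsto_drift_nhdsLT_one (hT : 0 < T) : Tendsto (drift γ T) (𝓝[<] 1) atBot := by
  have hflip : Tendsto (fun x : ℝ => 1 - x) (𝓝[<] 1) (𝓝[>] 0) := by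
    have h := (map_subLeft_nhdsLT (c := (1 : ℝ)) (a := 1)).le
    rwa [sub_self] at h
  have h := tendsto_neg_atTop_atBot.comp ((tendsto_drift_nhdsGT_zero (γ := γ) hT).comp hflip)
  refine (h.atBot_add (tendsto_const_nhds (x := -2 * γ))).congr fun x => ?_
  have := drift_one_sub_add_drift (γ := γ) (T := T) x
  simp only [Function.comp_apply]
  linarith

lemma drift_one_add_div_two_neg (hγ : γ ∈ Ioo 0 1) (hT : 0 < T) : drift γ T ((1 + γ) / 2) < 0 := by
  rw [drift, one_add_div_two_div_one_sub]
  nlinarith [mul_pos hT (log_one_add_div_one_sub_pos hγ)]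

variable {s : ℝ}

lemma drift_strictAntiOn_Ioc (hs : s ∈ Ioo 0 1) (hsT : s ^ 2 = 1 - 2 * T) :
    StrictAntiOn (drift γ T) (Ioc 0 ((1 - s) / 2)) := by
  refine drift_strictAntiOn (convex_Ioc _ _) (fun x hx => ⟨hx.1, by linarith [hx.2, hs.1]⟩) ?_
  rw [interior_Ioc]
  intro x hx
  nlinarith [hx.2, hs.1]

lemma drift_strictMonoOn_Icc (hs : s ∈ Ioo 0 1) (hsT : s ^ 2 = 1 - 2 * T) :
    StrictMonoOn (drift γ T) (Icc ((1 - s) / 2) ((1 + s) / 2)) := by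
  refine drift_strictMonoOn (convex_Icc _ _)
    (fun x hx => ⟨by linarith [hx.1, hs.2], by linarith [hx.2, hs.2]⟩) ?_
  rw [interior_Icc]
  intro x hx
  nlinarith [hx.1, hx.2]

lemma drift_strictAntiOn_Ico (hs : s ∈ Ioo 0 1) (hsT : s ^ 2 = 1 - 2 * T) :
    StrictAntiOn (drift γ T) (Ico ((1 + s) / 2) 1) := by
  refine drift_strictAntiOn (convex_Ico _ _) (fun x hx => ⟨by linarith [hx.1, hs.1], hx.2⟩) ?_
  rw [interior_Ico]
  intro x hx
  nlinarith [hx.1, hs.1]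

lemma drift_upper_turning (hsT : s ^ 2 = 1 - 2 * T) :
    drift γ T ((1 + s) / 2) = upperTurningValue γ s := by
  rw [drift, upperTurningValue, one_add_div_two_div_one_sub, show T = (1 - s ^ 2) / 2 by linarith]
  ring

lemma drift_lower_turning_lt (hs : s ∈ Ioo 0 1) (hsT : s ^ 2 = 1 - 2 * T) :
    drift γ T ((1 - s) / 2) < -γ := by
  have hsum := drift_one_sub_add_drift (γ := γ) (T := T) ((1 + s) / 2)
  rw [show 1 - (1 + s) / 2 = (1 - s) / 2 by ring] at hsum
  have hlt := drift_strictMonoOn_Icc (γ := γ) hs hsT (left_mem_Icc.2 (by linarith [hs.1]))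
    (right_mem_Icc.2 (by linarith [hs.1])) (by linarith [hs.1])
  linarith

lemma drift_lt_drift_upper_turning (hs : s ∈ Ioo 0 1) (hsT : s ^ 2 = 1 - 2 * T) {x : ℝ}
    (hx : x ∈ Ico ((1 - s) / 2) 1) (hne : x ≠ (1 + s) / 2) :
    drift γ T x < drift γ T ((1 + s) / 2) := by
  rcases hne.lt_or_gt with h | h
  · exact drift_strictMonoOn_Icc hs hsT ⟨hx.1, h.le⟩ ⟨by linarith [hs.1], le_rfl⟩ h
  · exact drift_strictAntiOn_Ico hs hsT ⟨le_rfl, by linarith [hs.2]⟩ ⟨h.le, hx.2⟩ h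

lemma exists_drift_zero_left (hγ : 0 ≤ γ) (hs : s ∈ Ioo 0 1) (hsT : s ^ 2 = 1 - 2 * T) :
    ∃ x ∈ Ioo 0 ((1 - s) / 2), drift γ T x = 0 :=
  exists_zero_of_tendsto_nhdsGT (by linarith [hs.2])
    (continuousOn_drift.mono fun x hx => ⟨hx.1, by linarith [hx.2, hs.1]⟩)
    (tendsto_drift_nhdsGT_zero (by nlinarith [hs.1, hs.2]))
    (by linarith [drift_lower_turning_lt (γ := γ) hs hsT])

lemma exists_drift_zero_middle (hγ : γ ∈ Ioo 0 1) (hs : s ∈ Ioo 0 1) (hsT : s ^ 2 = 1 - 2 * T)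
    (hγs : γ < s) (hpos : 0 < drift γ T ((1 + s) / 2)) :
    ∃ x ∈ Ioo ((1 + γ) / 2) ((1 + s) / 2), drift γ T x = 0 :=
  intermediate_value_Ioo (by linarith)
    (continuousOn_drift.mono fun x hx => ⟨by linarith [hx.1, hγ.1], by linarith [hx.2, hs.2]⟩)
    ⟨drift_one_add_div_two_neg hγ (by nlinarith [hs.1, hs.2]), hpos⟩

lemma exists_drift_zero_right (hs : s ∈ Ioo 0 1) (hsT : s ^ 2 = 1 - 2 * T)
    (hpos : 0 < drift γ T ((1 + s) / 2)) :
    ∃ x ∈ Ioo ((1 + s) / 2) 1, drift γ T x = 0 :=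
  exists_zero_of_tendsto_nhdsLT (by linarith [hs.2])
    (continuousOn_drift.mono fun x hx => ⟨by linarith [hx.1, hs.1], hx.2⟩)
    (tendsto_drift_nhdsLT_one (by nlinarith [hs.1, hs.2])) hpos

end drift


section upperTurningValue

variable {γ s : ℝ}

lemma hasDerivAt_upperTurningValue (hs : s ∈ Ioo 0 1) :
    HasDerivAt (upperTurningValue γ) (s * log ((1 + s) / (1 - s))) s := by
  have hs₁ : 1 - s ≠ 0 := (sub_pos.2 hs.2).ne'
  have hs₂ : 1 + s ≠ 0 := by linarith [hs.1]
  have hlog := hasDerivAt_log_add_div_sub (a := 1) (b := 1) (by linarith [hs.1]) (sub_pos.2 hs.2)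
  have hcoef : HasDerivAt (fun s : ℝ => (1 - s ^ 2) / 2) (-s) s :=
    (((hasDerivAt_pow 2 s).const_sub 1).div_const 2).congr_deriv (by ring)
  exact (((hasDerivAt_id' s).sub_const γ).sub (hcoef.mul hlog)).congr_deriv (by field_simp; ring)

lemma upperTurningValue_strictMonoOn : StrictMonoOn (upperTurningValue γ) (Ioo 0 1) := by
  refine strictMonoOn_of_deriv_pos (convex_Ioo 0 1)
    (fun s hs => (hasDerivAt_upperTurningValue hs).continuousAt.continuousWithinAt) fun s hs => ?_
  rw [interior_Ioo] at hs
  rw [(hasDerivAt_upperTurningValue hs).deriv]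
  exact mul_pos hs.1 (log_one_add_div_one_sub_pos hs)

lemma lt_of_upperTurningValue_pos (hs : s ∈ Ioo 0 1) (hG : 0 < upperTurningValue γ s) : γ < s := by
  have hcoef : 0 < (1 - s ^ 2) / 2 := by nlinarith [hs.1, hs.2]
  have := mul_pos hcoef (log_one_add_div_one_sub_pos hs)
  rw [upperTurningValue] at hG
  linarith

end upperTurningValue

section zeros

variable {γ T s : ℝ}

lemma drift_zeros_of_upperTurningValue_pos (hγ : γ ∈ Ioo 0 1) (hs : s ∈ Ioo 0 1)
    (hsT : s ^ 2 = 1 - 2 * T) (hG : 0 < upperTurningValue γ s) :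
    ∃ x₁ x₂ x₃ : ℝ, x₁ ∈ Ioo 0 ((1 - s) / 2) ∧ x₂ ∈ Ioo ((1 + γ) / 2) ((1 + s) / 2) ∧
      x₃ ∈ Ioo ((1 + s) / 2) 1 ∧ x₁ < x₂ ∧ x₂ < x₃ ∧
      {x | x ∈ Ioo 0 1 ∧ drift γ T x = 0} = {x₁, x₂, x₃} := by
  have hγs := lt_of_upperTurningValue_pos hs hG
  rw [← drift_upper_turning hsT] at hG
  obtain ⟨x₁, hx₁, h₁⟩ := exists_drift_zero_left hγ.1.le hs hsT
  obtain ⟨x₂, hx₂, h₂⟩ := exists_drift_zero_middle hγ hs hsT hγs hG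
  obtain ⟨x₃, hx₃, h₃⟩ := exists_drift_zero_right hs hsT hG
  refine ⟨x₁, x₂, x₃, hx₁, hx₂, hx₃, by linarith [hx₁.2, hx₂.1, hγ.1, hs.1],
    by linarith [hx₂.2, hx₃.1], ?_⟩
  ext x
  simp only [mem_ofPred_eq, mem_insert_iff, mem_singleton_iff]
  constructor
  · rintro ⟨hx, hx0⟩
    rcases le_or_gt x ((1 - s) / 2) with hl | hl
    · exact .inl <| (drift_strictAntiOn_Ioc hs hsT).injOn ⟨hx.1, hl⟩ ⟨hx₁.1, hx₁.2.le⟩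
        (hx0.trans h₁.symm)
    rcases le_or_gt x ((1 + s) / 2) with hu | hu
    · exact .inr <| .inl <| (drift_strictMonoOn_Icc hs hsT).injOn ⟨hl.le, hu⟩
        ⟨by linarith [hx₂.1, hγ.1, hs.1], hx₂.2.le⟩ (hx0.trans h₂.symm)
    · exact .inr <| .inr <| (drift_strictAntiOn_Ico hs hsT).injOn ⟨hu.le, hx.2⟩
        ⟨hx₃.1.le, hx₃.2⟩ (hx0.trans h₃.symm)
  · rintro (rfl | rfl | rfl)
    · exact ⟨⟨hx₁.1, by linarith [hx₁.2, hs.1]⟩, h₁⟩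
    · exact ⟨⟨by linarith [hx₂.1, hγ.1], by linarith [hx₂.2, hs.2]⟩, h₂⟩
    · exact ⟨⟨by linarith [hx₃.1, hs.1], hx₃.2⟩, h₃⟩

lemma drift_zeros_of_upperTurningValue_eq_zero (hγ : 0 ≤ γ) (hs : s ∈ Ioo 0 1)
    (hsT : s ^ 2 = 1 - 2 * T) (hG : upperTurningValue γ s = 0) :
    ∃ x₁ ∈ Ioo 0 ((1 - s) / 2), {x | x ∈ Ioo 0 1 ∧ drift γ T x = 0} = {x₁, (1 + s) / 2} := by
  rw [← drift_upper_turning hsT] at hG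
  obtain ⟨x₁, hx₁, h₁⟩ := exists_drift_zero_left hγ hs hsT
  refine ⟨x₁, hx₁, ?_⟩
  ext x
  simp only [mem_ofPred_eq, mem_insert_iff, mem_singleton_iff]
  constructor
  · rintro ⟨hx, hx0⟩
    rcases le_or_gt x ((1 - s) / 2) with hl | hl
    · exact .inl <| (drift_strictAntiOn_Ioc hs hsT).injOn ⟨hx.1, hl⟩ ⟨hx₁.1, hx₁.2.le⟩
        (hx0.trans h₁.symm)
    · by_contra! hne
      linarith [drift_lt_drift_upper_turning (γ := γ) hs hsT ⟨hl.le, hx.2⟩ hne.2]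
  · rintro (rfl | rfl)
    · exact ⟨⟨hx₁.1, by linarith [hx₁.2, hs.1]⟩, h₁⟩
    · exact ⟨⟨by linarith [hs.1], by linarith [hs.2]⟩, hG⟩

lemma drift_zeros_of_upperTurningValue_neg (hγ : 0 ≤ γ) (hs : s ∈ Ioo 0 1)
    (hsT : s ^ 2 = 1 - 2 * T) (hG : upperTurningValue γ s < 0) :
    ∃ x₁ ∈ Ioo 0 (1 / 2), {x | x ∈ Ioo 0 1 ∧ drift γ T x = 0} = {x₁} := by
  rw [← drift_upper_turning hsT] at hG
  obtain ⟨x₁, hx₁, h₁⟩ := exists_drift_zero_left hγ hs hsT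
  refine ⟨x₁, ⟨hx₁.1, by linarith [hx₁.2, hs.1]⟩, ?_⟩
  ext x
  simp only [mem_ofPred_eq, mem_singleton_iff]
  constructor
  · rintro ⟨hx, hx0⟩
    rcases le_or_gt x ((1 - s) / 2) with hl | hl
    · exact (drift_strictAntiOn_Ioc hs hsT).injOn ⟨hx.1, hl⟩ ⟨hx₁.1, hx₁.2.le⟩ (hx0.trans h₁.symm)
    · rcases eq_or_ne x ((1 + s) / 2) with rfl | hne
      · linarith
      · linarith [drift_lt_drift_upper_turning (γ := γ) hs hsT ⟨hl.le, hx.2⟩ hne]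
  · rintro rfl
    exact ⟨⟨hx₁.1, by linarith [hx₁.2, hs.1]⟩, h₁⟩

lemma drift_zeros_of_half_le (hγ : 0 < γ) (hT : 1 / 2 ≤ T) :
    ∃ x₁ ∈ Ioo 0 (1 / 2), {x | x ∈ Ioo 0 1 ∧ drift γ T x = 0} = {x₁} := by
  have hleft : StrictAntiOn (drift γ T) (Ioc 0 (1 / 2)) := by
    refine drift_strictAntiOn (convex_Ioc _ _) (fun x hx => ⟨hx.1, by linarith [hx.2]⟩) ?_
    rw [interior_Ioc]
    intro x hx
    nlinarith [hx.2]
  have hright : StrictAntiOn (drift γ T) (Ico (1 / 2) 1) := by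
    refine drift_strictAntiOn (convex_Ico _ _) (fun x hx => ⟨by linarith [hx.1], hx.2⟩) ?_
    rw [interior_Ico]
    intro x hx
    nlinarith [hx.1]
  have hhalf : drift γ T (1 / 2) = -γ := by norm_num [drift]
  obtain ⟨x₁, hx₁, h₁⟩ := exists_zero_of_tendsto_nhdsGT (f := drift γ T) one_half_pos
    (continuousOn_drift.mono fun x hx => ⟨hx.1, by linarith [hx.2]⟩)
    (tendsto_drift_nhdsGT_zero (by linarith)) (by linarith)
  refine ⟨x₁, hx₁, ?_⟩
  ext x
  simp only [mem_ofPred_eq, mem_singleton_iff]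
  constructor
  · rintro ⟨hx, hx0⟩
    rcases le_or_gt x (1 / 2) with hl | hl
    · exact hleft.injOn ⟨hx.1, hl⟩ ⟨hx₁.1, hx₁.2.le⟩ (hx0.trans h₁.symm)
    · linarith [hright ⟨le_rfl, by norm_num⟩ ⟨hl.le, hx.2⟩ hl]
  · rintro rfl
    exact ⟨⟨hx₁.1, by linarith [hx₁.2]⟩, h₁⟩

end zeros

theorem stmt_13 (γ Tc : ℝ) (hγ : γ ∈ Set.Ioo (0:ℝ) 1)
    (hTc : Tc ∈ Set.Ioo (0:ℝ) (1/2))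
    (hTceq : Real.sqrt (1 - 2 * Tc) - γ -
      Tc * Real.log ((1 + Real.sqrt (1 - 2 * Tc)) / (1 - Real.sqrt (1 - 2 * Tc))) = 0)
    (f : ℝ → ℝ → ℝ)
    (hf : ∀ x T, f x T = 2 * x - (1 + γ) - T * Real.log (x / (1 - x))) :
    (∀ T, 0 < T → T < Tc →
      ∃ x₁ x₂ x₃ : ℝ,
        x₁ ∈ Set.Ioo (0:ℝ) ((1 - Real.sqrt (1 - 2 * T)) / 2) ∧
        x₂ ∈ Set.Ioo ((1 + γ) / 2) ((1 + Real.sqrt (1 - 2 * T)) / 2) ∧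
        x₃ ∈ Set.Ioo ((1 + Real.sqrt (1 - 2 * T)) / 2) 1 ∧
        x₁ < x₂ ∧ x₂ < x₃ ∧
        {x | x ∈ Set.Ioo (0:ℝ) 1 ∧ f x T = 0} = {x₁, x₂, x₃}) ∧
    (∃ x₁ : ℝ,
        x₁ ∈ Set.Ioo (0:ℝ) ((1 - Real.sqrt (1 - 2 * Tc)) / 2) ∧
        {x | x ∈ Set.Ioo (0:ℝ) 1 ∧ f x Tc = 0} =
          {x₁, (1 + Real.sqrt (1 - 2 * Tc)) / 2}) ∧
    (∀ T, Tc < T →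
      ∃ x₁ ∈ Set.Ioo (0:ℝ) (1/2),
        {x | x ∈ Set.Ioo (0:ℝ) 1 ∧ f x T = 0} = {x₁}) := by
  obtain rfl : f = fun x T => drift γ T x := funext₂ hf
  have hsqrt (T : ℝ) (h₀ : 0 < T) (h₁ : T < 1 / 2) :
      √(1 - 2 * T) ∈ Ioo 0 1 ∧ √(1 - 2 * T) ^ 2 = 1 - 2 * T :=
    ⟨⟨sqrt_pos.2 (by linarith), (sqrt_lt' one_pos).2 (by linarith)⟩, sq_sqrt (by linarith)⟩
  obtain ⟨hsc, hscT⟩ := hsqrt Tc hTc.1 hTc.2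
  have hGc : upperTurningValue γ √(1 - 2 * Tc) = 0 := by
    rwa [upperTurningValue, hscT, show (1 - (1 - 2 * Tc)) / 2 = Tc by ring]
  refine ⟨fun T hT₀ hTTc => ?_,
    drift_zeros_of_upperTurningValue_eq_zero hγ.1.le hsc hscT hGc, fun T hTcT => ?_⟩
  · obtain ⟨hs, hsT⟩ := hsqrt T hT₀ (hTTc.trans hTc.2)
    refine drift_zeros_of_upperTurningValue_pos hγ hs hsT ?_
    rw [← hGc]
    exact upperTurningValue_strictMonoOn hsc hs (sqrt_lt_sqrt (by linarith [hTc.2]) (by linarith))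
  · rcases lt_or_ge T (1 / 2) with hT | hT
    · obtain ⟨hs, hsT⟩ := hsqrt T (hTc.1.trans hTcT) hT
      refine drift_zeros_of_upperTurningValue_neg hγ.1.le hs hsT ?_
      rw [← hGc]
      exact upperTurningValue_strictMonoOn hs hsc (sqrt_lt_sqrt (by linarith) (by linarith))
    · exact drift_zeros_of_half_le hγ.1 hT
end

section
/- The critical temperature T_c(γ), defined implicitly for γ ∈ (0,1) by F(γ,T) := √(1-2T) - γ - T·ln((1+√(1-2T))/(1-√(1-2T))) = 0 with T ∈ (0,1/2), is strictly decreasing in γ; indeed dT_c/dγ = -1/ln((1+√(1-2T_c))/(1-√(1-2T_c))) < 0. -/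
/-!
Substitute `s = √(1 - 2T)`, so that `T = (1 - s²)/2` and the equation `F(γ, T) = 0` becomes
`γ = g(s) := s - (1 - s²)/2 · L(s)` with `L(s) = ln((1 + s)/(1 - s))`. Since `L' = 2/(1 - s²)`,
one finds `g'(s) = s L(s) > 0` on `(0, 1)`, so `g` is a strictly increasing map of `(0, 1)` into
itself and `s(γ)` is its inverse: continuous, strictly increasing, with `s' = 1/(s L(s))`.
Hence `T_c = (1 - s²)/2` is strictly decreasing with `T_c' = -s s' = -1/L(s)`.
-/

open Set Filter Topology

section InverseOfStrictMono

variable {α β : Type*} [LinearOrder α] [LinearOrder β]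

theorem strictMonoOn_of_leftInvOn_of_monotoneOn {g : β → α} {s : α → β} {U : Set α}
    {V : Set β} (hg : MonotoneOn g V) (hs : MapsTo s U V) (hinv : ∀ y ∈ U, g (s y) = y) :
    StrictMonoOn s U := by
  intro y hy y' hy' hlt
  by_contra! hle
  have := hg (hs hy') (hs hy) hle
  rw [hinv y hy, hinv y' hy'] at this
  exact absurd hlt (not_lt.2 this)

variable [TopologicalSpace α] [OrderTopology α] [TopologicalSpace β] [OrderTopology β]
  [DenselyOrdered β]

theorem continuousOn_of_leftInvOn_of_strictMonoOn {g : β → α} {s : α → β} {U : Set α}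
    {V : Set β} (hU : IsOpen U) (hV : IsOpen V) (hg : StrictMonoOn g V) (hs : MapsTo s U V)
    (hgV : MapsTo g V U) (hinv : ∀ y ∈ U, g (s y) = y) : ContinuousOn s U := by
  have hV_sub : V ⊆ s '' U := fun t ht =>
    ⟨g t, hgV ht, hg.injOn (hs (hgV ht)) ht (hinv _ (hgV ht))⟩
  have hs_mono := strictMonoOn_of_leftInvOn_of_monotoneOn hg.monotoneOn hs hinv
  intro y hy
  exact (hs_mono.continuousAt_of_image_mem_nhds (hU.mem_nhds hy)
    (mem_of_superset (hV.mem_nhds (hs hy)) hV_sub)).continuousWithinAt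

end InverseOfStrictMono

noncomputable def logRatio (s : ℝ) : ℝ := Real.log ((1 + s) / (1 - s))

/-- With `s = √(1 - 2T)`, i.e. `T = (1 - s²)/2`, the equation `F(γ, T) = 0` reads
`couplingOf s = γ`. -/
noncomputable def couplingOf (s : ℝ) : ℝ := s - (1 - s ^ 2) / 2 * logRatio s

theorem logRatio_pos {s : ℝ} (h0 : 0 < s) (h1 : s < 1) : 0 < logRatio s := by
  apply Real.log_pos
  rw [lt_div_iff₀ (by linarith)]
  linarith

theorem hasDerivAt_logRatio {s : ℝ} (h0 : -1 < s) (h1 : s < 1) :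
    HasDerivAt logRatio (2 / (1 - s ^ 2)) s := by
  have hquot : HasDerivAt (fun s : ℝ => (1 + s) / (1 - s))
      ((1 * (1 - s) - (1 + s) * -1) / (1 - s) ^ 2) s :=
    ((hasDerivAt_id s).const_add 1).div ((hasDerivAt_id s).const_sub 1) (by linarith)
  refine (hquot.log (div_pos (by linarith) (by linarith)).ne').congr_deriv ?_
  have : 1 - s ≠ 0 := by linarith
  have : 1 + s ≠ 0 := by linarith
  have : 1 - s ^ 2 ≠ 0 := by nlinarith
  field_simp
  ring

theorem hasDerivAt_couplingOf {s : ℝ} (h0 : -1 < s) (h1 : s < 1) :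
    HasDerivAt couplingOf (s * logRatio s) s := by
  have hweight : HasDerivAt (fun s : ℝ => (1 - s ^ 2) / 2) (-s) s := by
    refine (((hasDerivAt_pow 2 s).const_sub 1).div_const 2).congr_deriv ?_
    ring
  refine ((hasDerivAt_id s).sub (hweight.mul (hasDerivAt_logRatio h0 h1))).congr_deriv ?_
  have : 1 - s ^ 2 ≠ 0 := by nlinarith
  field_simp
  ring

theorem couplingOf_strictMonoOn : StrictMonoOn couplingOf (Ico 0 1) := by
  apply strictMonoOn_of_deriv_pos (convex_Ico 0 1)
  · intro x hx
    exact (hasDerivAt_couplingOf (by linarith [hx.1]) hx.2).continuousAt.continuousWithinAt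
  · intro x hx
    rw [interior_Ico] at hx
    rw [(hasDerivAt_couplingOf (by linarith [hx.1]) hx.2).deriv]
    exact mul_pos hx.1 (logRatio_pos hx.1 hx.2)

theorem couplingOf_mapsTo : MapsTo couplingOf (Ioo 0 1) (Ioo 0 1) := by
  intro s ⟨h0, h1⟩
  constructor
  · simpa [couplingOf, logRatio] using
      couplingOf_strictMonoOn (left_mem_Ico.2 one_pos) ⟨h0.le, h1⟩ h0
  · have : 0 < (1 - s ^ 2) / 2 * logRatio s := mul_pos (by nlinarith) (logRatio_pos h0 h1)
    simp only [couplingOf]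
    linarith

theorem sqrt_one_sub_two_mul_mem_Ioo {T : ℝ} (hT : T ∈ Ioo (0 : ℝ) (1 / 2)) :
    √(1 - 2 * T) ∈ Ioo (0 : ℝ) 1 :=
  ⟨Real.sqrt_pos.2 (by linarith [hT.2]), (Real.sqrt_lt' one_pos).2 (by linarith [hT.1])⟩

theorem one_sub_sq_sqrt_one_sub_two_mul {T : ℝ} (hT : T ≤ 1 / 2) :
    (1 - √(1 - 2 * T) ^ 2) / 2 = T := by
  rw [Real.sq_sqrt (by linarith)]
  ring

theorem couplingOf_sqrt_one_sub_two_mul {γ T : ℝ} (hT : T ≤ 1 / 2)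
    (h : √(1 - 2 * T) - γ - T * logRatio √(1 - 2 * T) = 0) :
    couplingOf √(1 - 2 * T) = γ := by
  rw [couplingOf, one_sub_sq_sqrt_one_sub_two_mul hT]
  linarith

theorem stmt_15 (Tc : ℝ → ℝ)
    (hmem : ∀ γ ∈ Set.Ioo (0:ℝ) 1, Tc γ ∈ Set.Ioo (0:ℝ) (1/2))
    (heq : ∀ γ ∈ Set.Ioo (0:ℝ) 1,
      Real.sqrt (1 - 2 * Tc γ) - γ -
        Tc γ * Real.log ((1 + Real.sqrt (1 - 2 * Tc γ)) /
          (1 - Real.sqrt (1 - 2 * Tc γ))) = 0) :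
    StrictAntiOn Tc (Set.Ioo (0:ℝ) 1) ∧
    ∀ γ ∈ Set.Ioo (0:ℝ) 1,
      HasDerivAt Tc
        (-1 / Real.log ((1 + Real.sqrt (1 - 2 * Tc γ)) /
          (1 - Real.sqrt (1 - 2 * Tc γ)))) γ ∧
      -1 / Real.log ((1 + Real.sqrt (1 - 2 * Tc γ)) /
          (1 - Real.sqrt (1 - 2 * Tc γ))) < 0 := by
  set s : ℝ → ℝ := fun γ => √(1 - 2 * Tc γ)
  have hs_mem : MapsTo s (Ioo 0 1) (Ioo 0 1) := fun γ hγ =>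
    sqrt_one_sub_two_mul_mem_Ioo (hmem γ hγ)
  have hTc : ∀ γ ∈ Ioo (0 : ℝ) 1, (1 - s γ ^ 2) / 2 = Tc γ := fun γ hγ =>
    one_sub_sq_sqrt_one_sub_two_mul (hmem γ hγ).2.le
  have hinv : ∀ γ ∈ Ioo (0 : ℝ) 1, couplingOf (s γ) = γ := fun γ hγ =>
    couplingOf_sqrt_one_sub_two_mul (hmem γ hγ).2.le (heq γ hγ)
  have hg_mono : StrictMonoOn couplingOf (Ioo 0 1) :=
    couplingOf_strictMonoOn.mono Ioo_subset_Ico_self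
  have hs_mono : StrictMonoOn s (Ioo 0 1) :=
    strictMonoOn_of_leftInvOn_of_monotoneOn hg_mono.monotoneOn hs_mem hinv
  have hs_cont : ContinuousOn s (Ioo 0 1) := continuousOn_of_leftInvOn_of_strictMonoOn
    isOpen_Ioo isOpen_Ioo hg_mono hs_mem couplingOf_mapsTo hinv
  refine ⟨fun a ha b hb hab => ?_, fun γ hγ => ?_⟩
  · rw [← hTc a ha, ← hTc b hb]
    nlinarith [hs_mono ha hb hab, (hs_mem ha).1]
  obtain ⟨hs0, hs1⟩ := hs_mem hγ
  have hL : 0 < logRatio (s γ) := logRatio_pos hs0 hs1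
  have hγ_nhds : Ioo (0 : ℝ) 1 ∈ 𝓝 γ := isOpen_Ioo.mem_nhds hγ
  have hs_deriv : HasDerivAt s (s γ * logRatio (s γ))⁻¹ γ :=
    (hasDerivAt_couplingOf (by linarith) hs1).of_local_left_inverse
      (hs_cont.continuousAt hγ_nhds) (mul_pos hs0 hL).ne' (eventually_of_mem hγ_nhds hinv)
  refine ⟨?_, div_neg_of_neg_of_pos (by norm_num) hL⟩
  refine ((((hs_deriv.pow 2).const_sub 1).div_const 2).congr_of_eventuallyEq
    (eventually_of_mem hγ_nhds fun y hy => (hTc y hy).symm)).congr_deriv ?_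
  change _ = -1 / logRatio (s γ)
  field_simp
  ring
end

section
/- Fix γ ∈ (0,1), let 0 < T < 1/2 and let x(T) be the unique zero of f(x;T) = 2x - (1+γ) - T·ln(x/(1-x)) in (0, x_l(T)) where x_l(T) = (1-√(1-2T))/2. Then x(T) is strictly increasing in T, and x(T) → 0 as T → 0⁺. -/
/-!
For fixed `T`, `y ↦ 2y - c - T log (y / (1 - y))` has derivative `2 - T / (y (1 - y))`, which is
negative exactly below the spinodal point `x_l(T)`, so the function is decreasing on `(0, x_l(T))`.
Raising `T` to `T' > T` increases the function at every `y < 1/2` (the logarithm is negative there)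
and moves `x_l` to the right, so at `x(T)` the function for `T'` is positive; being decreasing, it
vanishes only further right, i.e. `x(T) < x(T')`. The limit follows by squeezing
`0 < x(T) < x_l(T) → 0`.
-/

open Real Set Filter Topology

-- For `T > 1/2`, `√` of a negative number is `0`, so this is `1/2`; the lemmas below allow it.
noncomputable def spinodal (T : ℝ) : ℝ := (1 - √(1 - 2 * T)) / 2

noncomputable def meanField (c T y : ℝ) : ℝ := 2 * y - c - T * log (y / (1 - y))

lemma spinodal_monotone : Monotone spinodal := fun _ _ h => by
  unfold spinodal
  gcongr

lemma spinodal_le_half (T : ℝ) : spinodal T ≤ 1 / 2 := by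
  unfold spinodal
  linarith [sqrt_nonneg (1 - 2 * T)]

lemma tendsto_spinodal_zero : Tendsto spinodal (𝓝 0) (𝓝 0) := by
  have h : Continuous spinodal := by unfold spinodal; fun_prop
  simpa [spinodal] using h.tendsto 0

lemma two_mul_mul_one_sub_lt_of_lt_spinodal {y T : ℝ} (hy : y < spinodal T) :
    2 * y * (1 - y) < T := by
  have hsqrt : √(1 - 2 * T) < 1 - 2 * y := by unfold spinodal at hy; linarith
  have hpos : 0 < 1 - 2 * y := (sqrt_nonneg _).trans_lt hsqrt
  nlinarith [(sqrt_lt' hpos).mp hsqrt]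

lemma hasDerivAt_log_div_one_sub {y : ℝ} (h0 : y ≠ 0) (h1 : y ≠ 1) :
    HasDerivAt (fun y => log (y / (1 - y))) (y * (1 - y))⁻¹ y := by
  have h1' : 1 - y ≠ 0 := sub_ne_zero.mpr h1.symm
  have hdiv : HasDerivAt (fun y => y / (1 - y)) ((1 * (1 - y) - y * (0 - 1)) / (1 - y) ^ 2) y :=
    (hasDerivAt_id' y).div ((hasDerivAt_const y 1).sub (hasDerivAt_id' y)) h1'
  refine (hdiv.log (div_ne_zero h0 h1')).congr_deriv ?_
  field_simp
  ring

lemma meanField_strictAntiOn (c T : ℝ) :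
    StrictAntiOn (meanField c T) (Ioo 0 (spinodal T)) := by
  have hderiv : ∀ y ∈ Ioo 0 (spinodal T),
      HasDerivAt (meanField c T) (2 - T * (y * (1 - y))⁻¹) y := fun y hy => by
    have hy1 : y ≠ 1 := by linarith [hy.2, spinodal_le_half T]
    show HasDerivAt (fun y => 2 * y - c - T * log (y / (1 - y))) _ y
    exact ((((hasDerivAt_id' y).const_mul 2).sub_const c).sub
      ((hasDerivAt_log_div_one_sub hy.1.ne' hy1).const_mul T)).congr_deriv (by ring)
  refine strictAntiOn_of_hasDerivWithinAt_neg (convex_Ioo _ _)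
    (fun y hy => (hderiv y hy).continuousAt.continuousWithinAt)
    (fun y hy => (hderiv y (interior_subset hy)).hasDerivWithinAt) fun y hy => ?_
  rw [interior_Ioo] at hy
  have hprod : 0 < y * (1 - y) := mul_pos hy.1 (by linarith [hy.2, spinodal_le_half T])
  rw [sub_neg, ← div_eq_mul_inv, lt_div_iff₀ hprod]
  linarith [two_mul_mul_one_sub_lt_of_lt_spinodal hy.2]

lemma meanField_lt_meanField_of_lt (c : ℝ) {y T₁ T₂ : ℝ} (hy0 : 0 < y) (hy : y < 1 / 2)
    (hT : T₁ < T₂) : meanField c T₁ y < meanField c T₂ y := by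
  have hlog : log (y / (1 - y)) < 0 :=
    log_neg (div_pos hy0 (by linarith)) ((div_lt_one (by linarith)).mpr (by linarith))
  unfold meanField
  nlinarith

lemma strictMonoOn_of_meanField_eq_zero {c : ℝ} {x : ℝ → ℝ} {s : Set ℝ}
    (hx : ∀ T ∈ s, x T ∈ Ioo 0 (spinodal T) ∧ meanField c T (x T) = 0) : StrictMonoOn x s := by
  intro T₁ hT₁ T₂ hT₂ hlt
  obtain ⟨hmem₁, hzero₁⟩ := hx T₁ hT₁
  obtain ⟨hmem₂, hzero₂⟩ := hx T₂ hT₂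
  have hmem₁₂ : x T₁ ∈ Ioo 0 (spinodal T₂) :=
    ⟨hmem₁.1, hmem₁.2.trans_le (spinodal_monotone hlt.le)⟩
  have hgap : meanField c T₂ (x T₂) < meanField c T₂ (x T₁) := by
    rw [hzero₂, ← hzero₁]
    exact meanField_lt_meanField_of_lt c hmem₁.1 (hmem₁.2.trans_le (spinodal_le_half T₁)) hlt
  exact ((meanField_strictAntiOn c T₂).lt_iff_gt hmem₂ hmem₁₂).mp hgap

theorem stmt_17_general (γ : ℝ)
    (f : ℝ → ℝ → ℝ)
    (hf : ∀ x T, f x T = 2 * x - (1 + γ) - T * Real.log (x / (1 - x)))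
    (x : ℝ → ℝ)
    (hx : ∀ T ∈ Set.Ioo (0:ℝ) (1/2),
      x T ∈ Set.Ioo (0:ℝ) ((1 - Real.sqrt (1 - 2 * T)) / 2) ∧ f (x T) T = 0) :
    StrictMonoOn x (Set.Ioo (0:ℝ) (1/2)) ∧
    Filter.Tendsto x (nhdsWithin 0 (Set.Ioi 0)) (nhds 0) := by
  have hzero : ∀ T ∈ Ioo (0:ℝ) (1/2),
      x T ∈ Ioo 0 (spinodal T) ∧ meanField (1 + γ) T (x T) = 0 :=
    fun T hT => ⟨(hx T hT).1, (hf _ _).symm.trans (hx T hT).2⟩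
  refine ⟨strictMonoOn_of_meanField_eq_zero hzero, ?_⟩
  refine tendsto_of_tendsto_of_tendsto_of_le_of_le' tendsto_const_nhds
    (tendsto_spinodal_zero.mono_left nhdsWithin_le_nhds) ?_ ?_ <;>
  filter_upwards [Ioo_mem_nhdsGT (by norm_num : (0:ℝ) < 1/2)] with T hT
  exacts [(hzero T hT).1.1.le, (hzero T hT).1.2.le]

theorem stmt_17 (γ : ℝ) (hγ : γ ∈ Set.Ioo (0:ℝ) 1)
    (f : ℝ → ℝ → ℝ)
    (hf : ∀ x T, f x T = 2 * x - (1 + γ) - T * Real.log (x / (1 - x)))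
    (x : ℝ → ℝ)
    (hx : ∀ T ∈ Set.Ioo (0:ℝ) (1/2),
      x T ∈ Set.Ioo (0:ℝ) ((1 - Real.sqrt (1 - 2 * T)) / 2) ∧ f (x T) T = 0)
    (huniq : ∀ T ∈ Set.Ioo (0:ℝ) (1/2),
      ∀ y ∈ Set.Ioo (0:ℝ) ((1 - Real.sqrt (1 - 2 * T)) / 2), f y T = 0 → y = x T) :
    StrictMonoOn x (Set.Ioo (0:ℝ) (1/2)) ∧
    Filter.Tendsto x (nhdsWithin 0 (Set.Ioi 0)) (nhds 0) :=
  stmt_17_general γ f hf x hx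
end
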